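/- (Bound on dominating jobs of smaller laxity.) Let α ∈ (0,1), let J be a finite set of jobs feasible on m machines, and let j ∈ J be α-tight. Then the number of jobs j' ∈ J \ {j} with I(j) ⊆ I(j') and ℓ_{j'} ≤ ℓ_j is at most m/α. -/

import Mathlib

/-- A job given by integer release date `r`, deadline `d`, and processing time `p`. -/
structure Job where
  r : ℤ
  d : ℤ
  p : ℤ
deriving DecidableEq

/-- A job is valid if `1 ≤ p` and `r + p ≤ d`. -/
def Job.valid (j : Job) : Prop := 1 ≤ j.p ∧ j.r + j.p ≤ j.d

/-- The interval `I(j) = {t ∈ ℤ : r ≤ t < d}` of a job. -/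
noncomputable def Job.interval (j : Job) : Finset ℤ := Finset.Ico j.r j.d

/-- The laxity `ℓ_j = d - r - p` of a job. -/
def Job.lax (j : Job) : ℤ := j.d - j.r - j.p

/-- The contribution `C(j, I) = max {0, |I ∩ I(j)| - ℓ_j}` of a job to a finite set `I ⊆ ℤ`. -/
noncomputable def contribution (j : Job) (I : Finset ℤ) : ℤ :=
  max 0 (((I ∩ j.interval).card : ℤ) - j.lax)

/-- A finite set of jobs `J` is feasible on `m` machines. -/
def Feasible (J : Finset Job) (m : ℕ) : Prop :=
  ∃ σ : ℤ → Finset Job,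
    (∀ t, σ t ⊆ J) ∧
    (∀ t, (σ t).card ≤ m) ∧
    (∀ t, ∀ j ∈ σ t, j.r ≤ t ∧ t < j.d) ∧
    (∀ j ∈ J, ((Finset.Ico j.r j.d).filter (fun t => j ∈ σ t)).card = j.p.toNat)

/-- A job is `α`-tight if `p_j > α (d_j - r_j)`. -/
def AlphaTight (α : ℝ) (j : Job) : Prop := α * ((j.d : ℝ) - (j.r : ℝ)) < (j.p : ℝ)

/-- The `β`-interval `I_β(j) = [r_j + βℓ_j, d_j - βℓ_j)` of a job (a real interval). -/
def betaInterval (β : ℝ) (j : Job) : Set ℝ :=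
  Set.Ico ((j.r : ℝ) + β * (j.lax : ℝ)) ((j.d : ℝ) - β * (j.lax : ℝ))

/-- Two jobs are agreeable if `(r_j - r_{j'})·(d_j - d_{j'}) ≥ 0`. -/
def Agreeable (j j' : Job) : Prop :=
  0 ≤ ((j.r : ℝ) - (j'.r : ℝ)) * ((j.d : ℝ) - (j'.d : ℝ))

/-- Two jobs are `β`-agreeable if they are agreeable and their `β`-intervals intersect. -/
def BetaAgreeable (β : ℝ) (j j' : Job) : Prop :=
  Agreeable j j' ∧ (betaInterval β j ∩ betaInterval β j').Nonempty

/-!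
Let `S` be the set of jobs `k ≠ j` with `I(j) ⊆ I(k)` and `ℓ_k ≤ ℓ_j`. Outside `I(j)` a job
`k ∈ S` can run for at most `|I(k)| - |I(j)|` time units, so it runs at least
`p_k - |I(k)| + |I(j)| = |I(j)| - ℓ_k ≥ |I(j)| - ℓ_j = p_j` units inside `I(j)`. Double counting
the machine-slots of `I(j)` gives `|S| p_j ≤ m |I(j)|`, and tightness `p_j > α |I(j)|` turns
this into `|S| ≤ m / α`.
-/

open Finset

lemma Job.card_interval {k : Job} (hk : k.valid) : (#k.interval : ℤ) = k.d - k.r := by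
  obtain ⟨hp, hrd⟩ := hk
  rw [Job.interval, Int.card_Ico]
  omega

lemma Finset.card_filter_le_card_filter_add_card_sdiff {α : Type*} [DecidableEq α]
    {s t : Finset α} (p : α → Prop) [DecidablePred p] (h : t ⊆ s) :
    #{a ∈ s | p a} ≤ #{a ∈ t | p a} + #(s \ t) := by
  conv_lhs => rw [← union_sdiff_of_subset h, filter_union]
  exact (card_union_le _ _).trans (Nat.add_le_add_left (card_filter_le _ _) _)

lemma Job.card_sub_lax_le_card_filter {k : Job} (hk : k.valid) {σ : ℤ → Finset Job}
    (hσk : #{t ∈ k.interval | k ∈ σ t} = k.p.toNat) {W : Finset ℤ} (hW : W ⊆ k.interval) :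
    (#W : ℤ) - k.lax ≤ #{t ∈ W | k ∈ σ t} := by
  have hsplit := card_filter_le_card_filter_add_card_sdiff (fun t => k ∈ σ t) hW
  have hle := card_le_card hW
  rw [hσk, card_sdiff_of_subset hW] at hsplit
  have hI := Job.card_interval hk
  unfold Job.lax
  obtain ⟨hp, -⟩ := hk
  omega

lemma Job.p_toNat_le_card_filter_of_dominates {j k : Job} (hj : j.valid) (hk : k.valid)
    {σ : ℤ → Finset Job} (hσk : #{t ∈ k.interval | k ∈ σ t} = k.p.toNat)
    (hsub : j.interval ⊆ k.interval) (hlax : k.lax ≤ j.lax) :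
    j.p.toNat ≤ #{t ∈ j.interval | k ∈ σ t} := by
  have hrun := Job.card_sub_lax_le_card_filter hk hσk hsub
  have hI := Job.card_interval hj
  unfold Job.lax at hlax hrun
  omega

/-- bound on dominating jobs of smaller laxity: if `j ∈ J` is α-tight,
at most `m/α` jobs `j' ≠ j` of `J` satisfy `I(j) ⊆ I(j')` and `ℓ_{j'} ≤ ℓ_j`. -/
theorem dominating_small_laxity_bound
    (α : ℝ) (hα : α ∈ Set.Ioo (0 : ℝ) 1)
    (J : Finset Job) (hJ : ∀ j ∈ J, j.valid) (m : ℕ) (hfeas : Feasible J m)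
    (j : Job) (hj : j ∈ J) (htight : AlphaTight α j) :
    ({j' : Job | j' ∈ J ∧ j' ≠ j ∧ j.interval ⊆ j'.interval ∧ j'.lax ≤ j.lax}.ncard : ℝ)
        ≤ (m : ℝ) / α := by
  obtain ⟨σ, -, hσm, -, hσp⟩ := hfeas
  have hjv := hJ j hj
  classical
  set S := {k ∈ J | k ≠ j ∧ j.interval ⊆ k.interval ∧ k.lax ≤ j.lax}
  have hS : {j' : Job | j' ∈ J ∧ j' ≠ j ∧ j.interval ⊆ j'.interval ∧ j'.lax ≤ j.lax} = ↑S := by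
    ext k; simp [S]
  have hrun : ∀ k ∈ S, j.p.toNat ≤ #(j.interval.bipartiteAbove (fun k t => k ∈ σ t) k) := by
    intro k hk
    obtain ⟨hkJ, -, hsub, hlax⟩ := mem_filter.mp hk
    exact Job.p_toNat_le_card_filter_of_dominates hjv (hJ k hkJ) (hσp k hkJ) hsub hlax
  have hcap : ∀ t ∈ j.interval, #(S.bipartiteBelow (fun k t => k ∈ σ t) t) ≤ m :=
    fun t _ => (card_le_card fun k hk => (mem_filter.mp hk).2).trans (hσm t)
  have hcount : (#S : ℝ) * j.p ≤ (j.d - j.r) * m := by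
    have h := card_mul_le_card_mul _ hrun hcap
    have hp : ((j.p.toNat : ℕ) : ℤ) = j.p := Int.toNat_of_nonneg (by linarith [hjv.1])
    have hI := Job.card_interval hjv
    exact_mod_cast (show (#S : ℤ) * j.p ≤ (j.d - j.r) * m by rw [← hp, ← hI]; exact_mod_cast h)
  have hL : (0 : ℝ) < j.d - j.r := by
    have : j.r < j.d := by linarith [hjv.1, hjv.2]
    exact sub_pos.mpr (by exact_mod_cast this)
  rw [hS, Set.ncard_coe_finset, le_div_iff₀ hα.1]
  unfold AlphaTight at htight
  nlinarith [(#S).cast_nonneg (α := ℝ)]
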